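/- Every Boolean function f : (Fin n → Bool) → Bool in the clone generated by {g₀}, where g₀(x,y,z) = x ∨ (y ∧ ¬z), is 0-separating: there exists an index i : Fin n such that for all x, f x = false implies x i = false. -/

import Mathlib

/-- The clone generated by a set `B` of Boolean functions: the smallest family containing all
projections and `B`, and closed under composition. -/
inductive InClone (B : (k : ℕ) → ((Fin k → Bool) → Bool) → Prop) :
    (n : ℕ) → ((Fin n → Bool) → Bool) → Prop
  | proj {n : ℕ} (i : Fin n) : InClone B n (fun x => x i)
  | base {k : ℕ} {g : (Fin k → Bool) → Bool} (hg : B k g) : InClone B k g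
  | comp {k n : ℕ} {g : (Fin k → Bool) → Bool} {h : Fin k → ((Fin n → Bool) → Bool)}
      (hg : InClone B k g) (hh : ∀ i, InClone B n (h i)) :
      InClone B n (fun x => g (fun i => h i x))

/-- g₀(x,y,z) = x ∨ (y ∧ ¬z). -/
def g0 : (Fin 3 → Bool) → Bool := fun x => x 0 || (x 1 && !x 2)

/-- The generating set {g₀}. -/
inductive G0Base : (k : ℕ) → ((Fin k → Bool) → Bool) → Prop
  | g0 : G0Base 3 g0

/-! The 0-separating functions form a clone: if `g` separates at `j` and `h j` separates at `i`,
then `x ↦ g (h · x)` separates at `i`. As `g₀` separates at its first argument, the whole clone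
generated by `g₀` is 0-separating. -/

def ZeroSeparating {ι : Type*} (f : (ι → Bool) → Bool) : Prop :=
  ∃ i, ∀ x, f x = false → x i = false

namespace ZeroSeparating

variable {ι κ : Type*}

theorem proj (i : ι) : ZeroSeparating fun x : ι → Bool => x i :=
  ⟨i, fun _ hx => hx⟩

theorem comp {g : (κ → Bool) → Bool} {h : κ → (ι → Bool) → Bool}
    (hg : ZeroSeparating g) (hh : ∀ j, ZeroSeparating (h j)) :
    ZeroSeparating fun x => g fun j => h j x := by
  obtain ⟨j, hj⟩ := hg
  obtain ⟨i, hi⟩ := hh j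
  exact ⟨i, fun x hx => hi x (hj _ hx)⟩

end ZeroSeparating

theorem InClone.zeroSeparating {B : (k : ℕ) → ((Fin k → Bool) → Bool) → Prop}
    (hB : ∀ k g, B k g → ZeroSeparating g) {n : ℕ} {f : (Fin n → Bool) → Bool}
    (hf : InClone B n f) : ZeroSeparating f := by
  induction hf with
  | proj i => exact .proj i
  | base hg => exact hB _ _ hg
  | comp _ _ ihg ihh => exact ihg.comp ihh

theorem zeroSeparating_g0 : ZeroSeparating g0 :=
  ⟨0, fun x hx => by simp_all [g0]⟩

theorem G0Base.zeroSeparating {k : ℕ} {g : (Fin k → Bool) → Bool} (hg : G0Base k g) :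
    ZeroSeparating g := by
  cases hg
  exact zeroSeparating_g0

/-- Every function in the clone generated by {g₀} is 0-separating. -/
theorem clone_g0_zeroSeparating {n : ℕ} {f : (Fin n → Bool) → Bool}
    (hf : InClone G0Base n f) :
    ∃ i : Fin n, ∀ x : Fin n → Bool, f x = false → x i = false :=
  hf.zeroSeparating fun _ _ => G0Base.zeroSeparating
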